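/- Let a > 0 and let f : ℝ → ℂ be a Schwartz function. Then for every z ∈ ℂ, [B_{a/2}( f′ + a·x·f )](z) = 2·(B_{a/2}f)′(z), where (B_{a/2}f)′ denotes the complex derivative of the entire function B_{a/2}f. -/

import Mathlib

/-!
With `K(x, z) = exp (a x z - a x² / 2 - a z² / 4)` one has `∂_z K = (a x - a z / 2) K` and
`∂_x K = (a z - a x) K`, while `‖K(x, z)‖` is dominated by a Gaussian in `x`, locally uniformly
in `z`.
Differentiating under the integral sign and integrating `∫ f' K` by parts, both sides become
`∫ f · (2 a x - a z) K`.
-/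

open Complex Real SchwartzMap

/-- The (parametrized) Bargmann transform `B_{a/2}`:
`(B_{a/2}f)(z) = (a/π)^{1/4} ∫_ℝ f(x) e^{axz − (a/2)x² − (a/4)z²} dx`. -/
noncomputable def bargmann (a : ℝ) (f : ℝ → ℂ) (z : ℂ) : ℂ :=
  ((a / Real.pi) ^ ((1 : ℝ) / 4) : ℝ) *
    ∫ x : ℝ, f x * Complex.exp (a * x * z - (a / 2) * x ^ 2 - (a / 4) * z ^ 2)

open MeasureTheory Filter

noncomputable def bargmannKernel (a x : ℝ) (z : ℂ) : ℂ :=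
  cexp (a * x * z - a / 2 * x ^ 2 - a / 4 * z ^ 2)

lemma bargmann_eq_integral_mul_bargmannKernel (a : ℝ) (f : ℝ → ℂ) (z : ℂ) :
    bargmann a f z = ((a / π) ^ ((1 : ℝ) / 4) : ℝ) * ∫ x, f x * bargmannKernel a x z :=
  rfl

lemma continuous_bargmannKernel (a : ℝ) (z : ℂ) : Continuous fun x => bargmannKernel a x z := by
  unfold bargmannKernel
  fun_prop

lemma hasDerivAt_bargmannKernel (a x : ℝ) (z : ℂ) :
    HasDerivAt (bargmannKernel a x) ((a * x - a / 2 * z) * bargmannKernel a x z) z := by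
  have h : HasDerivAt (fun w : ℂ => a * x * w - a / 2 * x ^ 2 - a / 4 * w ^ 2)
      (a * x - a / 2 * z) z := by
    refine ((((hasDerivAt_id' z).const_mul (a * x : ℂ)).sub_const (a / 2 * x ^ 2 : ℂ)).sub
      ((hasDerivAt_pow 2 z).const_mul (a / 4 : ℂ))).congr_deriv ?_
    push_cast
    ring
  exact h.cexp.congr_deriv (mul_comm _ _)

lemma hasDerivAt_bargmannKernel_left (a : ℝ) (z : ℂ) (x : ℝ) :
    HasDerivAt (fun y => bargmannKernel a y z) ((a * z - a * x) * bargmannKernel a x z) x := by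
  have h : HasDerivAt (fun w : ℂ => a * w * z - a / 2 * w ^ 2 - a / 4 * z ^ 2)
      (a * z - a * x) x := by
    refine (((((hasDerivAt_id' (x : ℂ)).const_mul (a : ℂ)).mul_const z).sub
      ((hasDerivAt_pow 2 (x : ℂ)).const_mul (a / 2 : ℂ))).sub_const
        (a / 4 * z ^ 2 : ℂ)).congr_deriv ?_
    push_cast
    ring
  exact h.cexp.comp_ofReal.congr_deriv (mul_comm _ _)

-- Completing the square in `x`.
lemma norm_bargmannKernel (a x : ℝ) (z : ℂ) :
    ‖bargmannKernel a x z‖ = rexp (a / 4 * ‖z‖ ^ 2 - a / 2 * (x - z.re) ^ 2) := by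
  rw [bargmannKernel, Complex.norm_exp, ← Complex.normSq_eq_norm_sq, Complex.normSq_apply]
  congr 1
  simp only [sq, sub_re, mul_re, ofReal_re, ofReal_im, mul_zero, sub_zero, mul_im, zero_mul,
    add_zero, div_ofNat_re, div_ofNat_im, zero_div]
  ring

section

variable {a : ℝ} {g : ℝ → ℂ} {C₀ C₁ : ℝ}

lemma norm_bargmannKernel_le (ha : 0 ≤ a) {z : ℂ} {R : ℝ} (hz : ‖z‖ ≤ R) (x : ℝ) :
    ‖bargmannKernel a x z‖ ≤ rexp (3 / 4 * a * R ^ 2) * rexp (-(a / 4) * x ^ 2) := by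
  rw [norm_bargmannKernel, ← Real.exp_add]
  gcongr
  have hre : z.re ^ 2 ≤ R ^ 2 := by
    nlinarith [Complex.abs_re_le_norm z, norm_nonneg z, abs_nonneg z.re, sq_abs z.re]
  have hzR : ‖z‖ ^ 2 ≤ R ^ 2 := by nlinarith [norm_nonneg z]
  nlinarith [sq_nonneg (x - 2 * z.re), mul_nonneg ha (sq_nonneg (x - 2 * z.re))]

lemma integrable_bargmannKernel (ha : 0 < a) (z : ℂ) :
    Integrable fun x => bargmannKernel a x z := by
  refine ((integrable_exp_neg_mul_sq (by positivity : 0 < a / 4)).const_mul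
    (rexp (3 / 4 * a * ‖z‖ ^ 2))).mono' (continuous_bargmannKernel a z).aestronglyMeasurable
    (ae_of_all _ fun x => norm_bargmannKernel_le ha.le le_rfl x)

lemma norm_mul_affine_le (hg₀ : ∀ x, ‖g x‖ ≤ C₀)
    (hg₁ : ∀ x, |x| * ‖g x‖ ≤ C₁) (b c : ℂ) (x : ℝ) :
    ‖g x * (b * x - c)‖ ≤ ‖b‖ * C₁ + ‖c‖ * C₀ := by
  calc ‖g x * (b * x - c)‖ = ‖b * (x * g x) - c * g x‖ := by ring_nf
    _ ≤ ‖b‖ * (|x| * ‖g x‖) + ‖c‖ * ‖g x‖ := by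
        refine (norm_sub_le _ _).trans_eq ?_
        simp only [norm_mul, Complex.norm_real, Real.norm_eq_abs]
    _ ≤ ‖b‖ * C₁ + ‖c‖ * C₀ := by gcongr <;> simp [hg₀, hg₁]

lemma integrable_mul_bargmannKernel (ha : 0 < a) (hg : AEStronglyMeasurable g) {C : ℝ}
    (hC : ∀ x, ‖g x‖ ≤ C) (z : ℂ) : Integrable fun x => g x * bargmannKernel a x z :=
  (integrable_bargmannKernel ha z).bdd_mul hg (ae_of_all _ hC)

lemma integrable_mul_sub_mul_bargmannKernel (ha : 0 < a) (hg : AEStronglyMeasurable g)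
    (hg₀ : ∀ x, ‖g x‖ ≤ C₀) (hg₁ : ∀ x, |x| * ‖g x‖ ≤ C₁) (b c z : ℂ) :
    Integrable fun x => g x * ((b * x - c) * bargmannKernel a x z) := by
  simpa only [Pi.mul_apply, mul_assoc] using integrable_mul_bargmannKernel ha
    (hg.mul (by fun_prop : Continuous fun x : ℝ => b * x - c).aestronglyMeasurable)
    (norm_mul_affine_le hg₀ hg₁ b c) z

lemma hasDerivAt_bargmann (ha : 0 < a) (hg : AEStronglyMeasurable g)
    (hg₀ : ∀ x, ‖g x‖ ≤ C₀) (hg₁ : ∀ x, |x| * ‖g x‖ ≤ C₁) (z : ℂ) :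
    HasDerivAt (bargmann a g) (((a / π) ^ ((1 : ℝ) / 4) : ℝ) *
      ∫ x, g x * ((a * x - a / 2 * z) * bargmannKernel a x z)) z := by
  set R := ‖z‖ + 1
  have hball : ∀ w ∈ Metric.ball z 1, ‖w‖ ≤ R := fun _ hw =>
    norm_le_of_mem_closedBall (Metric.ball_subset_closedBall hw)
  have hbound : ∀ x, ∀ w ∈ Metric.ball z 1,
      ‖g x * ((a * x - a / 2 * w) * bargmannKernel a x w)‖ ≤
        (a * C₁ + a / 2 * R * C₀) * (rexp (3 / 4 * a * R ^ 2) * rexp (-(a / 4) * x ^ 2)) := by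
    intro x w hw
    have hC₀ : 0 ≤ C₀ := (norm_nonneg _).trans (hg₀ 0)
    have hC₁ : 0 ≤ C₁ := by simpa using hg₁ 0
    have hcoeff : ‖g x * (a * x - a / 2 * w)‖ ≤ a * C₁ + a / 2 * R * C₀ := by
      refine (norm_mul_affine_le hg₀ hg₁ _ _ x).trans ?_
      rw [norm_mul, norm_div, Complex.norm_real, Real.norm_of_nonneg ha.le, Complex.norm_ofNat]
      gcongr
      exact hball w hw
    rw [← mul_assoc, norm_mul]
    gcongr
    exact norm_bargmannKernel_le ha.le (hball w hw) x
  have h := hasDerivAt_integral_of_dominated_loc_of_deriv_le (Metric.ball_mem_nhds z one_pos)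
    (Eventually.of_forall fun w => (integrable_mul_bargmannKernel ha hg hg₀ w).aestronglyMeasurable)
    (integrable_mul_bargmannKernel ha hg hg₀ z)
    (integrable_mul_sub_mul_bargmannKernel ha hg hg₀ hg₁ _ _ z).aestronglyMeasurable
    (ae_of_all _ hbound) (((integrable_exp_neg_mul_sq (by positivity : 0 < a / 4)).const_mul
      _).const_mul _)
    (ae_of_all _ fun x w _ => (hasDerivAt_bargmannKernel a x w).const_mul (g x))
  exact h.2.const_mul _

lemma integral_deriv_mul_bargmannKernel (ha : 0 < a) {f : ℝ → ℂ} (hf : Differentiable ℝ f)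
    {C₂ : ℝ} (hf₀ : ∀ x, ‖f x‖ ≤ C₀) (hf₁ : ∀ x, |x| * ‖f x‖ ≤ C₁) (hf₂ : ∀ x, ‖deriv f x‖ ≤ C₂)
    (z : ℂ) :
    ∫ x, deriv f x * bargmannKernel a x z =
      ∫ x, f x * ((a * x - a * z) * bargmannKernel a x z) := by
  have hmeas : AEStronglyMeasurable f := hf.continuous.aestronglyMeasurable
  have hibp := integral_mul_deriv_eq_deriv_mul_of_integrable
    (u := fun x => bargmannKernel a x z) (v := f)
    (fun x _ => hasDerivAt_bargmannKernel_left a z x) (fun x _ => (hf x).hasDerivAt)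
    ((integrable_mul_bargmannKernel ha (measurable_deriv f).aestronglyMeasurable hf₂ z).congr
      (ae_of_all _ fun _ => mul_comm _ _))
    ((integrable_mul_sub_mul_bargmannKernel ha hmeas hf₀ hf₁ a (a * z) z).neg.congr
      (ae_of_all _ fun x => by simp only [Pi.neg_apply, Pi.mul_apply]; ring))
    ((integrable_mul_bargmannKernel ha hmeas hf₀ z).congr (ae_of_all _ fun _ => mul_comm _ _))
  calc ∫ x, deriv f x * bargmannKernel a x z = ∫ x, bargmannKernel a x z * deriv f x := by
        simp_rw [mul_comm]
    _ = -∫ x, (a * z - a * x) * bargmannKernel a x z * f x := hibp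
    _ = ∫ x, f x * ((a * x - a * z) * bargmannKernel a x z) := by
        rw [← integral_neg]
        congr 1
        ext x
        ring

end

/-- [B_{a/2}(f' + a x f)](z) = 2 (B f)'(z) for Schwartz f. -/
theorem bargmann_creation (a : ℝ) (ha : 0 < a) (f : SchwartzMap ℝ ℂ) (z : ℂ) :
    bargmann a (fun x : ℝ => deriv (fun y : ℝ => f y) x + (a : ℂ) * (x : ℂ) * f x) z =
      2 * deriv (bargmann a (fun x : ℝ => f x)) z := by
  have hf₀ : ∀ x, ‖f x‖ ≤ SchwartzMap.seminorm ℂ 0 0 f := norm_le_seminorm ℂ f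
  have hf₁ : ∀ x, |x| * ‖f x‖ ≤ SchwartzMap.seminorm ℂ 1 0 f := by
    simpa using norm_pow_mul_le_seminorm ℂ f 1
  have hf₂ : ∀ x, ‖deriv f x‖ ≤ SchwartzMap.seminorm ℂ 0 0 (derivCLM ℂ ℂ f) := fun x => by
    simpa using norm_le_seminorm ℂ (derivCLM ℂ ℂ f) x
  have hmeas : AEStronglyMeasurable f := f.continuous.aestronglyMeasurable
  have hdfK := integrable_mul_bargmannKernel ha (measurable_deriv f).aestronglyMeasurable hf₂ z
  have hxfK := integrable_mul_sub_mul_bargmannKernel ha hmeas hf₀ hf₁ a 0 z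
  have hfK := integrable_mul_sub_mul_bargmannKernel ha hmeas hf₀ hf₁ a (a * z) z
  rw [(hasDerivAt_bargmann ha hmeas hf₀ hf₁ z).deriv, bargmann_eq_integral_mul_bargmannKernel,
    mul_left_comm (2 : ℂ), ← integral_const_mul (2 : ℂ)]
  congr 1
  calc ∫ x, (deriv f x + a * x * f x) * bargmannKernel a x z
      = (∫ x, deriv f x * bargmannKernel a x z) +
          ∫ x, f x * ((a * x - 0) * bargmannKernel a x z) := by
        rw [← integral_add hdfK hxfK]
        congr 1
        ext x
        ring
    _ = ∫ x, (f x * ((a * x - a * z) * bargmannKernel a x z) +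
          f x * ((a * x - 0) * bargmannKernel a x z)) := by
        rw [integral_deriv_mul_bargmannKernel ha f.differentiable hf₀ hf₁ hf₂,
          integral_add hfK hxfK]
    _ = ∫ x, 2 * (f x * ((a * x - a / 2 * z) * bargmannKernel a x z)) := by
        congr 1
        ext x
        ring
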